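/- arXiv:1503.05022 — 11 statements merged into one kernel-verified Lean document; each statement's English description precedes it below -/
import Mathlib

section
/- Let D : A → M be a σ-derivation of A into M over R, let x ∈ A and set y := x − σ(x). Then for every k ∈ ℕ, D(x^k) = Σ_{j=0}^{k−1} (k choose j)·(−y)^{k−1−j}·x^j • D(x). -/
lemma aux_coeff {A : Type*} [CommRing A] (a c : A) (k : ℕ) :
    ∑ j ∈ Finset.range (k+1), (((k+1).choose j : A) * c ^ (k - j) * a ^ j)
      = a ^ k + (a + c) * ∑ j ∈ Finset.range k, ((k.choose j : A) * c ^ (k - 1 - j) * a ^ j) := by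
  rw [Finset.sum_range_succ']
  have h1 : ∀ j ∈ Finset.range k,
      (((k+1).choose (j+1) : A) * c ^ (k - (j+1)) * a ^ (j+1))
      = a * ((k.choose j : A) * c ^ (k-1-j) * a ^ j)
        + ((k.choose (j+1) : A) * c ^ (k - (j+1)) * a ^ (j+1)) := by
    intro j hj
    have he : k - (j+1) = k - 1 - j := by omega
    rw [he, Nat.choose_succ_succ]
    push_cast
    ring
  rw [Finset.sum_congr rfl h1, Finset.sum_add_distrib]
  have h2 : ∑ j ∈ Finset.range k, ((k.choose (j+1) : A) * c ^ (k - (j+1)) * a ^ (j+1))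
        + ((k+1).choose 0 : A) * c ^ (k - 0) * a ^ 0
      = ∑ j ∈ Finset.range (k+1), ((k.choose j : A) * c ^ (k - j) * a ^ j) := by
    rw [Finset.sum_range_succ']
    simp
  have h3 : ∑ j ∈ Finset.range (k+1), ((k.choose j : A) * c ^ (k - j) * a ^ j)
      = a ^ k + c * ∑ j ∈ Finset.range k, ((k.choose j : A) * c ^ (k - 1 - j) * a ^ j) := by
    rw [Finset.sum_range_succ, Nat.choose_self, Nat.sub_self, Finset.mul_sum]
    have h4 : ∀ j ∈ Finset.range k,
        ((k.choose j : A) * c ^ (k - j) * a ^ j)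
        = c * ((k.choose j : A) * c ^ (k - 1 - j) * a ^ j) := by
      intro j hj
      simp only [Finset.mem_range] at hj
      have : k - j = (k - 1 - j) + 1 := by omega
      rw [this, pow_succ]
      ring
    rw [Finset.sum_congr rfl h4]
    push_cast
    ring
  rw [add_assoc, h2, h3, Finset.mul_sum]
  simp only [add_mul, Finset.mul_sum]
  rw [Finset.sum_add_distrib]; abel

/-- If `D : A → M` is a `σ`-derivation of `A` into `M` over `R`, `x ∈ A` and `y := x - σ(x)`,
then for every `k ∈ ℕ`, `D(x^k) = Σ_{j=0}^{k-1} (k choose j)·(-y)^{k-1-j}·x^j • D(x)`. -/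
theorem stmt2 {R A M : Type*} [CommRing R] [CommRing A] [Algebra R A]
    [AddCommGroup M] [Module R M] [Module A M] [IsScalarTower R A M]
    (σ : A →ₐ[R] A) (D : A →ₗ[R] M)
    (hD : ∀ x y : A, D (x * y) = y • D x + σ x • D y) :
    ∀ (x : A) (k : ℕ),
      D (x ^ k) =
        ∑ j ∈ Finset.range k,
          ((k.choose j : A) * (-(x - σ x)) ^ (k - 1 - j) * x ^ j) • D x := by
  intro x k
  have hD1 : D 1 = 0 := by
    have := hD 1 1
    simp at this
    exact this
  induction k with
  | zero => simp [hD1]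
  | succ k ih =>
      have : x ^ (k+1) = x * x ^ k := by ring
      rw [this, hD x (x ^ k), ih, Finset.smul_sum]
      have hc : σ x = x + (-(x - σ x)) := by ring
      calc x ^ k • D x + ∑ j ∈ Finset.range k,
              σ x • (((k.choose j : A) * (-(x - σ x)) ^ (k - 1 - j) * x ^ j) • D x)
          = (x ^ k + (x + (-(x - σ x))) *
              ∑ j ∈ Finset.range k,
                ((k.choose j : A) * (-(x - σ x)) ^ (k - 1 - j) * x ^ j)) • D x := by
            rw [add_smul, Finset.mul_sum, Finset.sum_smul]
            congr 1
            refine Finset.sum_congr rfl fun j hj => ?_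
            rw [smul_smul, ← hc]
        _ = (∑ j ∈ Finset.range (k+1),
              (((k+1).choose j : A) * (-(x - σ x)) ^ (k - j) * x ^ j)) • D x := by
            rw [aux_coeff]
        _ = ∑ j ∈ Finset.range (k+1),
              (((k+1).choose j : A) * (-(x - σ x)) ^ (k + 1 - 1 - j) * x ^ j) • D x := by
            rw [Finset.sum_smul]
            simp
end

section
/- Let D : A → M be a σ-derivation of A into M over R. Assume there exists x ∈ A such that D(x) is a regular (non-torsion) element of M, i.e., for every a ∈ A, a•D(x) = 0 implies a = 0. Then for every z ∈ A, D(z) = 0 implies σ(z) = z. -/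
/-- Let `D : A → M` be a `σ`-derivation of `A` into `M` over `R`. If there exists `x ∈ A` such
that `D(x)` is a regular (non-torsion) element of `M`, then `D(z) = 0` implies `σ(z) = z`. -/
theorem stmt3 {R A M : Type*} [CommRing R] [CommRing A] [Algebra R A]
    [AddCommGroup M] [Module R M] [Module A M] [IsScalarTower R A M]
    (σ : A →ₐ[R] A) (D : A →ₗ[R] M)
    (hD : ∀ x y : A, D (x * y) = y • D x + σ x • D y)
    (x : A) (hx : ∀ a : A, a • D x = 0 → a = 0) :
    ∀ z : A, D z = 0 → σ z = z := by
  intro z hz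
  have h1 := hD z x
  have h2 := hD x z
  rw [mul_comm] at h2
  rw [hz, smul_zero, add_zero] at h2
  rw [h2] at h1
  have h3 : (σ z - z) • D x = 0 := by
    rw [sub_smul, h1, hz, smul_zero, zero_add, sub_self]
  exact sub_eq_zero.mp (hx _ h3)
end

section
/- Let D : A → M be a σ-derivation of A into M over R. Assume there exists x ∈ A such that y := x − σ(x) acts injectively on M, i.e., for every m ∈ M, y•m = 0 implies m = 0. Then for every z ∈ A, σ(z) = z implies D(z) = 0. -/
/-- Let `D : A → M` be a `σ`-derivation of `A` into `M` over `R`. If there exists `x ∈ A` such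
that `y := x - σ(x)` acts injectively on `M`, then `σ(z) = z` implies `D(z) = 0`. -/
theorem stmt4 {R A M : Type*} [CommRing R] [CommRing A] [Algebra R A]
    [AddCommGroup M] [Module R M] [Module A M] [IsScalarTower R A M]
    (σ : A →ₐ[R] A) (D : A →ₗ[R] M)
    (hD : ∀ x y : A, D (x * y) = y • D x + σ x • D y)
    (x : A) (hy : ∀ m : M, (x - σ x) • m = 0 → m = 0) :
    ∀ z : A, σ z = z → D z = 0 := by
  intro z hz
  apply hy
  have h1 := hD x z
  have h2 := hD z x
  rw [mul_comm, h1, hz] at h2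
  -- h2 : z • D x + σ x • D z = x • D z + z • D x
  rw [sub_smul]
  have : σ x • D z = x • D z := by
    have := h2
    rw [add_comm (x • D z)] at this
    exact add_left_cancel this
  rw [this, sub_self]
end

section
/- Assume there exists x ∈ A such that y := x − σ(x) acts injectively on M (y•m = 0 implies m = 0). Let A^{σ=1} := {c ∈ A : σ(c) = c}, a subring of A. Then every σ-derivation D : A → M over R vanishes on A^{σ=1} and is A^{σ=1}-linear, i.e., D(c·z) = c•D(z) for all c ∈ A^{σ=1} and z ∈ A; consequently the set of σ-derivations of A into M over R coincides with the set of σ-derivations of A into M over A^{σ=1}. -/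
/-- Assume `y := x - σ(x)` acts injectively on `M` for some `x ∈ A`. Then every `σ`-derivation
`D : A → M` over `R` vanishes on the fixed subring `A^{σ=1}` and is `A^{σ=1}`-linear; moreover,
for an additive map satisfying the twisted Leibniz rule, `R`-linearity is equivalent to
`A^{σ=1}`-linearity, i.e. the σ-derivations of `A` into `M` over `R` coincide with those over
`A^{σ=1}`. -/
theorem stmt5 {R A M : Type*} [CommRing R] [CommRing A] [Algebra R A]
    [AddCommGroup M] [Module R M] [Module A M] [IsScalarTower R A M]
    (σ : A →ₐ[R] A) (x : A) (hy : ∀ m : M, (x - σ x) • m = 0 → m = 0) :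
    (∀ D : A →ₗ[R] M, (∀ a b : A, D (a * b) = b • D a + σ a • D b) →
      (∀ c : A, σ c = c → D c = 0) ∧ ∀ c z : A, σ c = c → D (c * z) = c • D z) ∧
    (∀ D : A →+ M, (∀ a b : A, D (a * b) = b • D a + σ a • D b) →
      ((∀ (r : R) (z : A), D (algebraMap R A r * z) = algebraMap R A r • D z) ↔
        ∀ c z : A, σ c = c → D (c * z) = c • D z)) := by
  have key : ∀ D : A → M, (∀ a b : A, D (a * b) = b • D a + σ a • D b) →
      ∀ c : A, σ c = c → D c = 0 := by
    intro D hD c hc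
    apply hy
    have h1 := hD c x
    have h2 := hD x c
    rw [mul_comm, hc] at h1
    have h3 : c • D x + x • D c = c • D x + σ x • D c := by
      rw [add_comm (c • D x)]
      exact h1.symm.trans h2
    have h4 := add_left_cancel h3
    rw [sub_smul, h4, sub_self]
  have lin : ∀ D : A → M, (∀ a b : A, D (a * b) = b • D a + σ a • D b) →
      ∀ c z : A, σ c = c → D (c * z) = c • D z := by
    intro D hD c z hc
    rw [hD c z, key D hD c hc, smul_zero, zero_add, hc]
  constructor
  · intro D hD
    exact ⟨key D hD, lin D hD⟩
  · intro D hD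
    constructor
    · intro _
      exact lin D hD
    · intro h r z
      exact h _ z (σ.commutes r)
end

section
/- Let S be a multiplicative submonoid of A with σ(S) ⊆ S, let B := S⁻¹A be the localization, and let σ_B be the unique R-algebra endomorphism of B with σ_B ∘ (canonical map A → B) = (canonical map) ∘ σ. Then every σ-derivation D : A → M over R extends uniquely to a σ_B-derivation D_B : B → B ⊗_A M over R (i.e., D_B(a/1) = 1 ⊗ D(a) for all a ∈ A); it is given by the formula D_B(a/s) = (1/(s·σ(s))) • (s•(1 ⊗ D(a)) − a•(1 ⊗ D(s))) for a ∈ A, s ∈ S. -/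
/-!
If `x = a / s` in `B = S⁻¹A`, the twisted Leibniz rule applied to `a = x * s` forces
`s • D_B x = D a - σ_B x • D s`; this gives uniqueness, and we take it as the definition of `D_B`.
It does not depend on the chosen fraction because `D` kills the kernel of `A → B`
(from `c * a = c * b` with `c ∈ S` one gets `σ c • D a = σ c • D b`, and `σ c` is a unit in `B`)
and because `D (x * y) = D (y * x)` yields the symmetry `(y - σ y) • D x = (x - σ x) • D y`.
The same symmetry turns the defining relation into the quotient formula of the statement.
-/

open scoped TensorProduct

namespace TwistedDerivation

variable {R A B N : Type*} [CommRing R] [CommRing A] [CommRing B] [Algebra R A] [Algebra A B]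
  [Algebra R B] [AddCommGroup N] [Module B N] [Module R N] (S : Submonoid A) {σB : B →ₐ[R] B}
  {d : A →ₗ[R] N}

local notation "ι" => algebraMap A B

/-- `A` acts on `N` through `algebraMap A B` and the twist `σ` lives on `B`, so that both the
base change of a `σ`-derivation of `A` and its extension to `B` (taking `A = B`) are instances. -/
def IsTwistedLeibniz (σ : B → B) (d : A → N) : Prop :=
  ∀ x y, d (x * y) = ι y • d x + σ (ι x) • d y

lemma IsTwistedLeibniz.map_one_eq_zero (hd : IsTwistedLeibniz σB d) : d 1 = 0 := by
  have h := hd 1 1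
  rw [mul_one, map_one ι, map_one σB, one_smul] at h
  exact left_eq_add.mp h

lemma IsTwistedLeibniz.sub_smul_comm (hd : IsTwistedLeibniz σB d) (x y : A) :
    (ι y - σB (ι y)) • d x = (ι x - σB (ι x)) • d y := by
  have h := hd x y
  rw [mul_comm, hd] at h
  linear_combination (norm := module) -h

lemma IsTwistedLeibniz.map_eq_of_algebraMap_eq [IsLocalization S B] (hd : IsTwistedLeibniz σB d)
    {a b : A} (h : ι a = ι b) : d a = d b := by
  obtain ⟨c, hc⟩ := (IsLocalization.eq_iff_exists S B).mp h
  have hdc := congrArg d hc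
  rw [hd, hd, h] at hdc
  exact ((IsLocalization.map_units B c).map σB).smul_left_cancel.mp (add_left_cancel hdc)

lemma isTwistedLeibniz_one_tmul {M : Type*} [AddCommGroup M] [Module R M] [Module A M]
    [IsScalarTower R A M] [IsScalarTower R A B] {σ : A → A} (hσB : ∀ a, σB (ι a) = ι (σ a))
    {D : A →ₗ[R] M} (hD : ∀ x y, D (x * y) = y • D x + σ x • D y) :
    IsTwistedLeibniz σB ((TensorProduct.mk A B M 1).restrictScalars R ∘ₗ D) := fun x y => by
  simp [hD, hσB, TensorProduct.tmul_add, TensorProduct.tmul_smul, algebraMap_smul]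

variable [IsLocalization S B]

variable (σB d) in
noncomputable def extendFun (x : B) : N :=
  IsLocalization.mk' B (1 : A) (IsLocalization.sec S x).2 •
    (d (IsLocalization.sec S x).1 - σB x • d (IsLocalization.sec S x).2)

lemma smul_extendFun (hd : IsTwistedLeibniz σB d) {x : B} {a : A} {s : S}
    (hx : x * ι s = ι a) : ι s • extendFun S σB d x = d a - σB x • d s := by
  set p := IsLocalization.sec S x
  have hp : x * ι p.2 = ι p.1 := IsLocalization.sec_spec S x
  have hp' : ι p.2 • extendFun S σB d x = d p.1 - σB x • d p.2 := by
    rw [extendFun, smul_smul, mul_comm, IsLocalization.mk'_spec, map_one, one_smul]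
  have key := hd.map_eq_of_algebraMap_eq S (a := p.1 * s) (b := a * p.2) (by
    rw [map_mul, map_mul, ← hp, ← hx]; ring)
  rw [hd, hd] at key
  have hσp : σB (ι p.1) = σB x * σB (ι p.2) := by rw [← hp, map_mul]
  have hσa : σB (ι a) = σB x * σB (ι s) := by rw [← hx, map_mul]
  have hsymm := hd.sub_smul_comm p.2 s
  apply (IsLocalization.map_units B p.2).smul_left_cancel.mp
  rw [smul_comm, hp']
  linear_combination (norm := module) key - hσp • d (s : A) + hσa • d (p.2 : A) - σB x • hsymm

lemma eq_extendFun_of_smul_eq (hd : IsTwistedLeibniz σB d) {x : B} {a : A} {s : S}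
    (hx : x * ι s = ι a) {v : N} (hv : ι s • v = d a - σB x • d s) :
    v = extendFun S σB d x :=
  (IsLocalization.map_units B s).smul_left_cancel.mp (hv.trans (smul_extendFun S hd hx).symm)

variable [IsScalarTower R A B] [IsScalarTower R B N]

variable (σB d) in
noncomputable def extend (hd : IsTwistedLeibniz σB d) : B →ₗ[R] N where
  toFun := extendFun S σB d
  map_add' x y := by
    obtain ⟨a, b, s, hx, hy⟩ := IsLocalization.surj₂ S B x y
    have hxy : (x + y) * ι s = ι (a + b) := by rw [add_mul, hx, hy, map_add]
    refine (eq_extendFun_of_smul_eq S hd hxy ?_).symm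
    rw [smul_add, smul_extendFun S hd hx, smul_extendFun S hd hy, map_add, map_add, add_smul]
    abel
  map_smul' r x := by
    obtain ⟨⟨a, s⟩, hx⟩ := IsLocalization.surj S x
    have hrx : (r • x) * ι s = ι (r • a) := by
      rw [smul_mul_assoc, hx, ← algebraMap.coe_smul]
    refine (eq_extendFun_of_smul_eq S hd hrx ?_).symm
    rw [RingHom.id_apply, smul_comm, smul_extendFun S hd hx, map_smul, map_smul, smul_sub,
      smul_assoc]

lemma smul_extend (hd : IsTwistedLeibniz σB d) {x : B} {a : A} {s : S} (hx : x * ι s = ι a) :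
    ι s • extend S σB d hd x = d a - σB x • d s :=
  smul_extendFun S hd hx

lemma eq_extend_of_smul_eq (hd : IsTwistedLeibniz σB d) {x : B} {a : A} {s : S}
    (hx : x * ι s = ι a) {v : N} (hv : ι s • v = d a - σB x • d s) : v = extend S σB d hd x :=
  eq_extendFun_of_smul_eq S hd hx hv

lemma extend_algebraMap (hd : IsTwistedLeibniz σB d) (a : A) : extend S σB d hd (ι a) = d a :=
  (eq_extend_of_smul_eq S hd (s := 1) (a := a) (by simp) (by simp [hd.map_one_eq_zero])).symm

lemma extend_mul (hd : IsTwistedLeibniz σB d) (x y : B) :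
    extend S σB d hd (x * y) = y • extend S σB d hd x + σB x • extend S σB d hd y := by
  obtain ⟨a, b, s, hx, hy⟩ := IsLocalization.surj₂ S B x y
  have hxy : x * y * ι (s * s : S) = ι (a * b) := by
    rw [Submonoid.coe_mul, map_mul, map_mul, ← hx, ← hy]; ring
  refine (eq_extend_of_smul_eq S hd hxy ?_).symm
  have hσa : σB (ι a) = σB x * σB (ι s) := by rw [← hx, map_mul]
  have hσb : σB (ι b) = σB y * σB (ι s) := by rw [← hy, map_mul]
  have hsymm := hd.sub_smul_comm b s
  have hX := smul_extend S hd hx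
  have hY := smul_extend S hd hy
  rw [Submonoid.coe_mul, hd, hd, map_mul, map_mul]
  linear_combination (norm := module) (ι s * y) • hX + (ι s * σB x) • hY +
    hy • (d a - σB x • d s) - hσa • d b - hσb • (σB x • d s) + σB x • hsymm

lemma eq_extend (hd : IsTwistedLeibniz σB d) (G : B →ₗ[R] N) (hG : IsTwistedLeibniz σB G)
    (hGd : ∀ a, G (ι a) = d a) : G = extend S σB d hd := by
  ext x
  obtain ⟨⟨a, s⟩, hx⟩ := IsLocalization.surj S x
  refine eq_extend_of_smul_eq S hd hx ?_
  have h := hG x (ι s)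
  rw [hx, hGd, hGd] at h
  exact eq_sub_of_add_eq h.symm

lemma extend_mk' (hd : IsTwistedLeibniz σB d) {σ : A → A} (hσB : ∀ a, σB (ι a) = ι (σ a))
    (hσS : ∀ s ∈ S, σ s ∈ S) (a : A) (s : S) :
    extend S σB d hd (IsLocalization.mk' B a s) =
      IsLocalization.mk' B (1 : A) ⟨s * σ s, S.mul_mem s.2 (hσS s s.2)⟩ •
        (ι s • d a - ι a • d s) := by
  refine (eq_extend_of_smul_eq S hd (IsLocalization.mk'_spec B a s) ?_).symm
  have hinv := IsLocalization.mk'_spec B (1 : A) ⟨s * σ s, S.mul_mem s.2 (hσS s s.2)⟩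
  have hσx : σB (IsLocalization.mk' B a s) * ι (σ s) = ι (σ a) := by
    rw [← hσB, ← hσB, ← map_mul, IsLocalization.mk'_spec]
  have hsymm := hd.sub_smul_comm a s
  rw [hσB, hσB] at hsymm
  rw [map_mul, map_one] at hinv
  apply (IsLocalization.map_units B ⟨σ s, hσS s s.2⟩).smul_left_cancel.mp
  linear_combination (norm := module) hinv • (ι s • d a - ι a • d s) + hσx • d (s : A) + hsymm

end TwistedDerivation

/-- Every `σ`-derivation `D : A → M` over `R` extends uniquely to a `σ_B`-derivation
`D_B : B → B ⊗[A] M` over `R` on the localization `B := S⁻¹A` (where `σ(S) ⊆ S`), and `D_B` is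
given by the quotient formula `D_B(a/s) = (1/(s·σ(s))) • (s•(1 ⊗ D(a)) - a•(1 ⊗ D(s)))`. -/
theorem stmt6 {R A M : Type*} [CommRing R] [CommRing A] [Algebra R A]
    [AddCommGroup M] [Module R M] [Module A M] [IsScalarTower R A M]
    (σ : A →ₐ[R] A) (S : Submonoid A) (hσS : ∀ s ∈ S, σ s ∈ S)
    (σB : Localization S →ₐ[R] Localization S)
    (hσB : ∀ a : A,
      σB (algebraMap A (Localization S) a) = algebraMap A (Localization S) (σ a))
    (D : A →ₗ[R] M) (hD : ∀ x y : A, D (x * y) = y • D x + σ x • D y) :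
    ∃ DB : Localization S →ₗ[R] Localization S ⊗[A] M,
      ((∀ x y : Localization S, DB (x * y) = y • DB x + σB x • DB y) ∧
        ∀ a : A, DB (algebraMap A (Localization S) a) = 1 ⊗ₜ[A] D a) ∧
      (∀ (a : A) (s : S),
        DB (Localization.mk a s) =
          Localization.mk (1 : A) ⟨(s : A) * σ (s : A), S.mul_mem s.2 (hσS s s.2)⟩ •
            (algebraMap A (Localization S) (s : A) • ((1 : Localization S) ⊗ₜ[A] D a) -
              algebraMap A (Localization S) a • ((1 : Localization S) ⊗ₜ[A] D (s : A)))) ∧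
      ∀ DB' : Localization S →ₗ[R] Localization S ⊗[A] M,
        (∀ x y : Localization S, DB' (x * y) = y • DB' x + σB x • DB' y) →
        (∀ a : A, DB' (algebraMap A (Localization S) a) = 1 ⊗ₜ[A] D a) →
        DB' = DB := by
  have hd := TwistedDerivation.isTwistedLeibniz_one_tmul hσB hD
  refine ⟨TwistedDerivation.extend S σB _ hd,
    ⟨TwistedDerivation.extend_mul S hd, TwistedDerivation.extend_algebraMap S hd⟩,
    fun a s => ?_, fun G hG hGd => TwistedDerivation.eq_extend S hd G hG hGd⟩
  rw [Localization.mk_eq_mk']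
  exact TwistedDerivation.extend_mk' S hd hσB hσS a s
end

section
/- Let (A, σ_1, …, σ_n) be an n-twisted commutative R-algebra with σ-coordinates x_1, …, x_n of Schwarz type, with associated partial derivations ∂_1, …, ∂_n, and set y_i := x_i − σ_i(x_i). Let M be an A-module equipped with pairwise commuting R-linear endomorphisms ∂_{M,1}, …, ∂_{M,n} satisfying ∂_{M,i}(x•s) = ∂_i(x)•s + σ_i(x)•∂_{M,i}(s) for all x ∈ A, s ∈ M. Then the maps σ_{M,i} : M → M defined by σ_{M,i}(s) := s − y_i•∂_{M,i}(s) are additive, σ_i-semilinear (σ_{M,i}(x•s) = σ_i(x)•σ_{M,i}(s)), and pairwise commute. Conversely, if the coordinates are strong (each y_i a unit), and σ_{M,1}, …, σ_{M,n} are pairwise commuting additive σ_i-semilinear endomorphisms of M, then the maps ∂_{M,i}(s) := y_i⁻¹•(s − σ_{M,i}(s)) pairwise commute and satisfy ∂_{M,i}(x•s) = ∂_i(x)•s + σ_i(x)•∂_{M,i}(s); these two constructions are mutually inverse. -/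
/-- Dictionary between twisted differential module structures and twisted semilinear module
structures over an `n`-twisted algebra with `σ`-coordinates of Schwarz type: the maps
`σ_{M,i}(s) = s - y_i • ∂_{M,i}(s)` are additive, `σ_i`-semilinear and pairwise commute;
conversely, when the coordinates are strong, `∂_{M,i}(s) = y_i⁻¹ • (s - σ_{M,i}(s))` are
commuting twisted derivations, and the two constructions are mutually inverse. -/
theorem stmt8 {R A M : Type*} [CommRing R] [CommRing A] [Algebra R A]
    [AddCommGroup M] [Module R M] [Module A M] [IsScalarTower R A M]
    (n : ℕ) (σ : Fin n → A →ₐ[R] A) (x : Fin n → A) (pd : Fin n → A →ₗ[R] A)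
    (hσcomm : ∀ i j a, σ i (σ j a) = σ j (σ i a))
    (hpdder : ∀ i a b, pd i (a * b) = b * pd i a + σ i a * pd i b)
    (hpdx : ∀ i j, pd i (x j) = if j = i then 1 else 0)
    (huniq : ∀ i (D : A →ₗ[R] A), (∀ a b, D (a * b) = b * D a + σ i a * D b) →
      (∀ j, D (x j) = if j = i then 1 else 0) → D = pd i)
    (hspan : ∀ D : A →ₗ[R] A,
      (∃ Ds : Fin n → A →ₗ[R] A,
        (∀ i a b, Ds i (a * b) = b * Ds i a + σ i a * Ds i b) ∧ D = ∑ i, Ds i) →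
      D = ∑ i, D (x i) • pd i)
    (hSchwarz1 : ∀ i j a, pd i (pd j a) = pd j (pd i a))
    (hSchwarz2 : ∀ i j, i ≠ j → ∀ a, σ i (pd j a) = pd j (σ i a))
    (pdM : Fin n → M →ₗ[R] M)
    (hpdMcomm : ∀ i j s, pdM i (pdM j s) = pdM j (pdM i s))
    (hpdMLeib : ∀ i (a : A) (s : M), pdM i (a • s) = pd i a • s + σ i a • pdM i s) :
    (∀ σM : Fin n → M → M,
      (∀ i s, σM i s = s - (x i - σ i (x i)) • pdM i s) →
      (∀ i s t, σM i (s + t) = σM i s + σM i t) ∧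
      (∀ i (a : A) (s : M), σM i (a • s) = σ i a • σM i s) ∧
      (∀ i j s, σM i (σM j s) = σM j (σM i s))) ∧
    ((∀ i, IsUnit (x i - σ i (x i))) →
      (∀ i (s : M),
        Ring.inverse (x i - σ i (x i)) • (s - (s - (x i - σ i (x i)) • pdM i s)) = pdM i s) ∧
      ∀ σM : Fin n → M → M,
        (∀ i s t, σM i (s + t) = σM i s + σM i t) →
        (∀ i (a : A) (s : M), σM i (a • s) = σ i a • σM i s) →
        (∀ i j s, σM i (σM j s) = σM j (σM i s)) →
        ∀ pdM' : Fin n → M → M,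
          (∀ i s, pdM' i s = Ring.inverse (x i - σ i (x i)) • (s - σM i s)) →
          (∀ i j s, pdM' i (pdM' j s) = pdM' j (pdM' i s)) ∧
          (∀ i (a : A) (s : M), pdM' i (a • s) = pd i a • s + σ i a • pdM' i s) ∧
          (∀ i s, s - (x i - σ i (x i)) • pdM' i s = σM i s)) := by
  classical
  -- σ i fixes x j for j ≠ i (from commutativity of A and the Leibniz rule)
  have hfix : ∀ i j, j ≠ i → σ i (x j) = x j := by
    intro i j hji
    have h1 : pd i (x i * x j) = x j := by
      rw [hpdder, hpdx i i, hpdx i j, if_pos rfl, if_neg hji]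
      ring
    have h2 : pd i (x j * x i) = σ i (x j) := by
      rw [hpdder, hpdx i i, hpdx i j, if_pos rfl, if_neg hji]
      ring
    rw [mul_comm] at h2
    rw [h1] at h2
    exact h2.symm
  have hfixy : ∀ i j, i ≠ j → σ i (x j - σ j (x j)) = x j - σ j (x j) := by
    intro i j hij
    rw [map_sub, hfix i j (Ne.symm hij), hσcomm, hfix i j (Ne.symm hij)]
  -- the key identity : y i * pd i a = a - σ i a
  have hkey : ∀ i a, (x i - σ i (x i)) * pd i a = a - σ i a := by
    intro i a
    set D : A →ₗ[R] A := LinearMap.id - (σ i).toLinearMap with hD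
    have hDapp : ∀ b, D b = b - σ i b := by
      intro b; simp [hD]
    have hsum : D = ∑ k, D (x k) • pd k := by
      apply hspan
      refine ⟨fun k => if k = i then D else 0, ?_, ?_⟩
      · intro k a b
        by_cases hk : k = i
        · subst hk
          simp only [if_true, eq_self_iff_true, hDapp, map_mul]
          ring
        · simp [hk]
      · simp
    have h := LinearMap.congr_fun hsum a
    rw [LinearMap.sum_apply, Finset.sum_eq_single i ?h1 ?h2] at h
    · rw [LinearMap.smul_apply, hDapp, hDapp, smul_eq_mul] at h
      exact h.symm
    case h1 =>
      intro k _ hk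
      rw [LinearMap.smul_apply, hDapp, hfix i k hk, sub_self, zero_smul]
    case h2 =>
      intro hmem; exact absurd (Finset.mem_univ i) hmem
  constructor
  · -- forward direction
    intro σM hσM
    refine ⟨?_, ?_, ?_⟩
    · intro i s t
      rw [hσM, hσM, hσM, map_add, smul_add]
      abel
    · intro i a s
      rw [hσM, hσM, hpdMLeib]
      have ha := hkey i a
      match_scalars
      · linear_combination -ha
      · ring
    · intro i j s
      by_cases hij : i = j
      · subst hij; rfl
      · have hform : ∀ p q, p ≠ q → ∀ t : M,
            σM p (σM q t) = t - (x q - σ q (x q)) • pdM q t - (x p - σ p (x p)) • pdM p t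
              + ((x p - σ p (x p)) * (x q - σ q (x q))) • pdM p (pdM q t) := by
          intro p q hpq t
          simp only [hσM]
          rw [map_sub, hpdMLeib, hfixy p q hpq]
          have h1 : (x p - σ p (x p)) * pd p (x q - σ q (x q)) = 0 := by
            rw [hkey, hfixy p q hpq, sub_self]
          match_scalars
          any_goals ring
          linear_combination h1
        rw [hform i j hij s, hform j i (Ne.symm hij) s, hpdMcomm]
        match_scalars <;> ring
  · -- converse direction
    intro hunit
    constructor
    · intro i s
      rw [sub_sub_cancel, smul_smul, Ring.inverse_mul_cancel _ (hunit i), one_smul]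
    · intro σM hadd hsemi hcomm pdM' hpdM'
      have hsub : ∀ i (u v : M), σM i (u - v) = σM i u - σM i v := by
        intro i u v
        have h := hadd i (u - v) v
        rw [sub_add_cancel] at h
        exact eq_sub_of_add_eq h.symm
      have hinvfix : ∀ i j, i ≠ j →
          σ i (Ring.inverse (x j - σ j (x j))) = Ring.inverse (x j - σ j (x j)) := by
        intro i j hij
        have h1 : σ i (Ring.inverse (x j - σ j (x j))) * (x j - σ j (x j)) = 1 := by
          calc σ i (Ring.inverse (x j - σ j (x j))) * (x j - σ j (x j))
              = σ i (Ring.inverse (x j - σ j (x j))) * σ i (x j - σ j (x j)) := by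
                rw [hfixy i j hij]
            _ = σ i (Ring.inverse (x j - σ j (x j)) * (x j - σ j (x j))) := (map_mul _ _ _).symm
            _ = σ i 1 := by rw [Ring.inverse_mul_cancel _ (hunit j)]
            _ = 1 := map_one _
        calc σ i (Ring.inverse (x j - σ j (x j)))
            = σ i (Ring.inverse (x j - σ j (x j)))
              * ((x j - σ j (x j)) * Ring.inverse (x j - σ j (x j))) := by
              rw [Ring.mul_inverse_cancel _ (hunit j), mul_one]
          _ = (σ i (Ring.inverse (x j - σ j (x j))) * (x j - σ j (x j)))
              * Ring.inverse (x j - σ j (x j)) := by ring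
          _ = Ring.inverse (x j - σ j (x j)) := by rw [h1, one_mul]
      refine ⟨?_, ?_, ?_⟩
      · -- commutation of pdM'
        intro i j s
        by_cases hij : i = j
        · subst hij; rfl
        · have hform : ∀ p q, p ≠ q → ∀ t : M,
              pdM' p (pdM' q t) =
                (Ring.inverse (x p - σ p (x p)) * Ring.inverse (x q - σ q (x q))) •
                  (t - σM q t - σM p t + σM p (σM q t)) := by
            intro p q hpq t
            simp only [hpdM']
            rw [hsemi p _ _, hinvfix p q hpq, hsub, ← smul_sub, smul_smul]
            congr 1
            abel
          rw [hform i j hij s, hform j i (Ne.symm hij) s, hcomm]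
          congr 1
          · ring
          · abel
      · -- Leibniz rule for pdM'
        intro i a s
        rw [hpdM', hpdM', hsemi]
        have ha := hkey i a
        have h2 := Ring.inverse_mul_cancel _ (hunit i)
        match_scalars
        any_goals ring
        any_goals linear_combination -Ring.inverse (x i - σ i (x i)) * ha + pd i a * h2
      · -- roundtrip
        intro i s
        rw [hpdM', smul_smul, Ring.mul_inverse_cancel _ (hunit i), one_smul, sub_sub_cancel]
end

section
/- Let (A, σ_1, …, σ_n, D_1, …, D_n) be an n-twisted differential R-algebra of Schwarz type and let B, with A ⊆ B and commuting elements ∂_1, …, ∂_n, be its Ore extension: the monomials ∂^k, k ∈ ℕ^n, form a basis of B as a left A-module and ∂_i·x = D_i(x) + σ_i(x)·∂_i for all x ∈ A. Then for every R-algebra C, every R-algebra homomorphism φ : A → C, and every family of pairwise commuting elements y_1, …, y_n ∈ C satisfying y_i·φ(x) = φ(D_i(x)) + φ(σ_i(x))·y_i for all i and all x ∈ A, there exists a unique R-algebra homomorphism Φ : B → C extending φ with Φ(∂_i) = y_i for all i. -/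
private theorem aux_set_prod {M : Type*} [Monoid M] (a : M) :
    ∀ (l : List M) (i : ℕ), (∀ u ∈ l, Commute a u) → i < l.length →
      (l.set i (a * l.getD i 1)).prod = a * l.prod := by
  intro l
  induction l with
  | nil => intro i _ hi; simp at hi
  | cons x xs ih =>
    intro i h hi
    cases i with
    | zero => simp [List.prod_cons, mul_assoc]
    | succ m =>
      have hx : Commute a x := h x (by simp)
      have hrec := ih m (fun u hu => h u (by simp [hu])) (by simpa using hi)
      show (x :: xs.set m _).prod = _
      rw [List.prod_cons, List.getD_cons_succ, hrec, List.prod_cons,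
        ← mul_assoc, ← hx.eq, mul_assoc]

private theorem aux_mul_prod {M : Type*} [Monoid M] {n : ℕ} (z : Fin n → M)
    (hz : ∀ i j, z i * z j = z j * z i) (k : Fin n → ℕ) (i : Fin n) :
    (List.ofFn fun j => z j ^ Function.update k i (k i + 1) j).prod
      = z i * (List.ofFn fun j => z j ^ k j).prod := by
  have hlist : (List.ofFn fun j => z j ^ Function.update k i (k i + 1) j)
      = (List.ofFn fun j => z j ^ k j).set i
          (z i * (List.ofFn fun j => z j ^ k j).getD i 1) := by
    apply List.ext_getElem
    · simp
    · intro m h1 h2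
      obtain ⟨iv, hv⟩ := i
      have hm : m < n := by simpa using h1
      rw [List.getElem_set]
      simp only [List.getElem_ofFn]
      by_cases hmi : iv = m
      · subst hmi
        rw [if_pos rfl, List.getD_eq_getElem _ _ (by simpa using hv)]
        simp only [List.getElem_ofFn]
        simp [Function.update_apply, pow_succ']
      · rw [if_neg hmi, Function.update_apply,
          if_neg (by simp [Fin.ext_iff]; omega)]
  rw [hlist]
  apply aux_set_prod
  · intro u hu
    simp only [List.mem_ofFn] at hu
    obtain ⟨j, rfl⟩ := hu
    exact Commute.pow_right (hz i j) _
  · simpa using i.isLt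

/-- Universal property of the Ore extension (twisted Weyl algebra) `B` of an `n`-twisted
differential `R`-algebra `(A, σ, D)` of Schwarz type: for every `R`-algebra `C`, every
`R`-algebra map `φ : A → C` and pairwise commuting `y_1, …, y_n ∈ C` with
`y_i·φ(x) = φ(D_i(x)) + φ(σ_i(x))·y_i`, there is a unique `R`-algebra map `Φ : B → C`
extending `φ` with `Φ(∂_i) = y_i`. -/
theorem stmt14 {R A B C : Type*} [CommRing R] [CommRing A] [Algebra R A]
    [Ring B] [Algebra R B] [Ring C] [Algebra R C]
    (n : ℕ) (σ : Fin n → A →ₐ[R] A) (D : Fin n → A →ₗ[R] A)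
    (hσcomm : ∀ i j a, σ i (σ j a) = σ j (σ i a))
    (hLeib : ∀ i a b, D i (a * b) = b * D i a + σ i a * D i b)
    (hDD : ∀ i j a, D i (D j a) = D j (D i a))
    (hσD : ∀ i j, i ≠ j → ∀ a, σ i (D j a) = D j (σ i a))
    (ι : A →ₐ[R] B) (hι : Function.Injective ι)
    (pd : Fin n → B)
    (hpdcomm : ∀ i j, pd i * pd j = pd j * pd i)
    (hbasis : ∀ b : B, ∃! c : (Fin n → ℕ) →₀ A,
      b = c.sum fun k a => ι a * (List.ofFn fun i => pd i ^ k i).prod)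
    (hrel : ∀ i (x : A), pd i * ι x = ι (D i x) + ι (σ i x) * pd i)
    (φ : A →ₐ[R] C) (y : Fin n → C)
    (hycomm : ∀ i j, y i * y j = y j * y i)
    (hyrel : ∀ i (x : A), y i * φ x = φ (D i x) + φ (σ i x) * y i) :
    ∃! Φ : B →ₐ[R] C, (∀ a : A, Φ (ι a) = φ a) ∧ ∀ i, Φ (pd i) = y i := by
  classical
  set mB : (Fin n → ℕ) → B := fun k => (List.ofFn fun i => pd i ^ k i).prod with hmB
  set mC : (Fin n → ℕ) → C := fun k => (List.ofFn fun i => y i ^ k i).prod with hmC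
  set fB : (Fin n → ℕ) → A → B := fun k a => ι a * mB k with hfB
  choose coeff hspec huniq using hbasis
  have hfB0 : ∀ k, fB k 0 = 0 := by intro k; simp [hfB]
  have hc_mono : ∀ (k : Fin n → ℕ) (a : A), coeff (fB k a) = Finsupp.single k a := by
    intro k a
    refine (huniq _ _ ?_).symm
    show fB k a = (Finsupp.single k a).sum fB
    rw [Finsupp.sum_single_index (hfB0 k)]
  set ψ : B → C := fun b => (coeff b).sum fun k a => φ a * mC k with hψ
  have hψ_mono : ∀ (k : Fin n → ℕ) (a : A), ψ (fB k a) = φ a * mC k := by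
    intro k a
    show (coeff (fB k a)).sum _ = _
    rw [hc_mono, Finsupp.sum_single_index (by simp)]
  have hcadd : ∀ b1 b2, coeff (b1 + b2) = coeff b1 + coeff b2 := by
    intro b1 b2
    refine (huniq _ _ ?_).symm
    show b1 + b2 = (coeff b1 + coeff b2).sum fB
    rw [Finsupp.sum_add_index' hfB0 (by intro k a b; simp [hfB, map_add, add_mul]),
      ← hspec b1, ← hspec b2]
  have hc0 : coeff 0 = 0 := by
    refine (huniq _ _ ?_).symm
    show (0 : B) = (0 : (Fin n → ℕ) →₀ A).sum fB
    rw [Finsupp.sum_zero_index]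
  have hψadd : ∀ b1 b2, ψ (b1 + b2) = ψ b1 + ψ b2 := by
    intro b1 b2
    show (coeff (b1 + b2)).sum _ = _
    rw [hcadd, Finsupp.sum_add_index' (by simp) (by intro k a b; simp [map_add, add_mul])]
  have hψ0 : ψ 0 = 0 := by
    show (coeff 0).sum _ = 0
    rw [hc0, Finsupp.sum_zero_index]
  set ψA : B →+ C := { toFun := ψ, map_zero' := hψ0, map_add' := hψadd } with hψA
  have hψ_sum : ∀ (c : (Fin n → ℕ) →₀ A) (g : (Fin n → ℕ) → A → B),
      ψ (c.sum g) = c.sum fun k a => ψ (g k a) := fun c g => map_finsuppSum ψA c g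
  -- L1 : left A-semilinearity
  have hL1 : ∀ (a : A) (b : B), ψ (ι a * b) = φ a * ψ b := by
    intro a b
    have hcoeff : coeff (ι a * b) = a • coeff b := by
      refine (huniq _ _ ?_).symm
      show ι a * b = (a • coeff b).sum fB
      rw [Finsupp.sum_smul_index' (fun k => hfB0 k)]
      conv_lhs => rw [hspec b, Finsupp.mul_sum]
      refine Finsupp.sum_congr fun k _ => ?_
      simp [hfB, smul_eq_mul, map_mul, mul_assoc]
    show (coeff (ι a * b)).sum _ = _
    rw [hcoeff, Finsupp.sum_smul_index' (by simp), Finsupp.mul_sum]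
    refine Finsupp.sum_congr fun k _ => ?_
    simp [smul_eq_mul, map_mul, mul_assoc]
  -- L2 : ψ (pd i * b) = y i * ψ b
  have hstep : ∀ (i : Fin n) (k : Fin n → ℕ) (a : A),
      ψ (pd i * fB k a) = y i * ψ (fB k a) := by
    intro i k a
    have hpdm : pd i * mB k = mB (Function.update k i (k i + 1)) :=
      (aux_mul_prod pd hpdcomm k i).symm
    have hym : y i * mC k = mC (Function.update k i (k i + 1)) :=
      (aux_mul_prod y hycomm k i).symm
    have hexp : pd i * fB k a
        = fB k (D i a) + fB (Function.update k i (k i + 1)) (σ i a) := by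
      show pd i * (ι a * mB k) = ι (D i a) * mB k + ι (σ i a) * mB _
      rw [← mul_assoc, hrel, add_mul, mul_assoc, hpdm]
    rw [hexp, hψadd, hψ_mono, hψ_mono, ← hym, ← mul_assoc (φ ((σ i) a)),
      ← add_mul, ← hyrel, mul_assoc, hψ_mono]
  have hL2 : ∀ (i : Fin n) (b : B), ψ (pd i * b) = y i * ψ b := by
    intro i b
    conv_lhs => rw [hspec b, Finsupp.mul_sum]
    rw [hψ_sum]
    conv_rhs => rw [hspec b, hψ_sum, Finsupp.mul_sum]
    exact Finsupp.sum_congr fun k _ => hstep i k _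
  have hLpow : ∀ (i : Fin n) (t : ℕ) (b : B), ψ (pd i ^ t * b) = y i ^ t * ψ b := by
    intro i t
    induction t with
    | zero => intro b; simp
    | succ m ih =>
      intro b
      rw [pow_succ', pow_succ', mul_assoc, hL2, ih, mul_assoc]
  have hLlist : ∀ (k : Fin n → ℕ) (l : List (Fin n)) (b : B),
      ψ ((l.map fun j => pd j ^ k j).prod * b) = (l.map fun j => y j ^ k j).prod * ψ b := by
    intro k l
    induction l with
    | nil => intro b; simp
    | cons j js ih =>
      intro b
      rw [List.map_cons, List.map_cons, List.prod_cons, List.prod_cons,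
        mul_assoc, hLpow, ih, mul_assoc]
  have hLmB : ∀ (k : Fin n → ℕ) (b : B), ψ (mB k * b) = mC k * ψ b := by
    intro k b
    have h1 : mB k = ((List.finRange n).map fun j => pd j ^ k j).prod := by
      rw [hmB]; simp only; rw [List.ofFn_eq_map]
    have h2 : mC k = ((List.finRange n).map fun j => y j ^ k j).prod := by
      rw [hmC]; simp only; rw [List.ofFn_eq_map]
    rw [h1, h2, hLlist]
  -- multiplicativity
  have hmul : ∀ b1 b2, ψ (b1 * b2) = ψ b1 * ψ b2 := by
    intro b1 b2
    conv_lhs => rw [hspec b1, Finsupp.sum_mul]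
    rw [hψ_sum]
    conv_rhs => rw [hspec b1, hψ_sum, Finsupp.sum_mul]
    refine Finsupp.sum_congr fun k _ => ?_
    rw [hψ_mono]
    show ψ (ι _ * mB k * b2) = _
    rw [mul_assoc, hL1, hLmB, ← mul_assoc]
  have hmB0 : mB 0 = 1 := by rw [hmB]; simp
  have hmC0 : mC 0 = 1 := by rw [hmC]; simp
  have hψι : ∀ a : A, ψ (ι a) = φ a := by
    intro a
    have : ι a = fB 0 a := by rw [hfB]; simp only; rw [hmB0, mul_one]
    rw [this, hψ_mono, hmC0, mul_one]
  have hone : ψ 1 = 1 := by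
    have := hψι 1
    rwa [map_one, map_one] at this
  have hψpd : ∀ i, ψ (pd i) = y i := by
    intro i
    have := hL2 i 1
    rwa [mul_one, hone, mul_one] at this
  set Φ : B →ₐ[R] C :=
    { toFun := ψ, map_one' := hone, map_mul' := hmul, map_zero' := hψ0,
      map_add' := hψadd,
      commutes' := fun r => by
        show ψ ((algebraMap R B) r) = (algebraMap R C) r
        rw [show (algebraMap R B) r = ι (algebraMap R A r) from (ι.commutes r).symm,
          hψι, φ.commutes] } with hΦ
  refine ⟨Φ, ⟨hψι, hψpd⟩, ?_⟩
  intro Φ' ⟨hΦ'ι, hΦ'pd⟩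
  apply AlgHom.ext
  intro b
  have hΦ'mB : ∀ k, Φ' (mB k) = mC k := by
    intro k
    rw [hmB, hmC]
    simp only
    rw [map_list_prod, List.map_ofFn]
    refine congrArg List.prod (congrArg List.ofFn (funext fun j => ?_))
    simp [Function.comp, map_pow, hΦ'pd]
  conv_lhs => rw [hspec b]
  rw [map_finsuppSum]
  show _ = ψ b
  rw [hψ]
  simp only
  refine Finsupp.sum_congr fun k _ => ?_
  show Φ' (ι _ * mB k) = _
  rw [map_mul, hΦ'ι, hΦ'mB]
end

section
/- Let (A, σ_1, …, σ_n) be an n-twisted commutative R-algebra with σ-coordinates x_1, …, x_n and associated partial derivations ∂_1, …, ∂_n, and set y_i := x_i − σ_i(x_i). Then for each i, id_A − σ_i = y_i·∂_i as maps A → A; that is, x − σ_i(x) = y_i·∂_i(x) for every x ∈ A. -/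
/-- For `σ`-coordinates `x_1, …, x_n` of an `n`-twisted commutative `R`-algebra, with
`y_i := x_i - σ_i(x_i)`, one has `id_A - σ_i = y_i·∂_i`, i.e. `z - σ_i(z) = y_i·∂_i(z)`
for every `z ∈ A`. -/
theorem stmt16 {R A : Type*} [CommRing R] [CommRing A] [Algebra R A]
    (n : ℕ) (σ : Fin n → A →ₐ[R] A) (x : Fin n → A) (pd : Fin n → A →ₗ[R] A)
    (hσcomm : ∀ i j a, σ i (σ j a) = σ j (σ i a))
    (hpdder : ∀ i a b, pd i (a * b) = b * pd i a + σ i a * pd i b)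
    (hpdx : ∀ i j, pd i (x j) = if j = i then 1 else 0)
    (huniq : ∀ i (D : A →ₗ[R] A), (∀ a b, D (a * b) = b * D a + σ i a * D b) →
      (∀ j, D (x j) = if j = i then 1 else 0) → D = pd i)
    (hspan : ∀ D : A →ₗ[R] A,
      (∃ Ds : Fin n → A →ₗ[R] A,
        (∀ i a b, Ds i (a * b) = b * Ds i a + σ i a * Ds i b) ∧ D = ∑ i, Ds i) →
      D = ∑ i, D (x i) • pd i) :
    ∀ i (z : A), z - σ i z = (x i - σ i (x i)) * pd i z := by
  intro i z
  -- Step 1: σ i fixes the other coordinates.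
  have hfix : ∀ j, j ≠ i → σ i (x j) = x j := by
    intro j hj
    have h1 := hpdder i (x j) (x i)
    have h2 := hpdder i (x i) (x j)
    simp only [hpdx, if_pos rfl, if_neg hj, mul_zero, mul_one, zero_add, add_zero] at h1 h2
    rw [mul_comm (x i) (x j), h1] at h2
    simpa using h2
  -- Step 2: id - σ i is a σ i-derivation.
  set D : A →ₗ[R] A := LinearMap.id - (σ i).toLinearMap with hDdef
  have hDapp : ∀ a, D a = a - σ i a := fun a => rfl
  have hDder : ∀ a b, D (a * b) = b * D a + σ i a * D b := by
    intro a b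
    simp only [hDapp, map_mul]
    ring
  -- Step 3: apply hspan to D.
  have hDspan : D = ∑ j, D (x j) • pd j := by
    refine hspan D ⟨fun j => if j = i then D else 0, ?_, ?_⟩
    · intro j a b
      by_cases h : j = i
      · subst h; simp only [if_pos rfl]; exact hDder a b
      · simp [if_neg h]
    · simp
  have := congrArg (fun f : A →ₗ[R] A => f z) hDspan
  simp only [LinearMap.sum_apply, LinearMap.smul_apply, smul_eq_mul] at this
  rw [Finset.sum_eq_single i (fun j _ hj => by simp [hDapp, hfix j hj]) (by simp)] at this
  simpa [hDapp] using this
end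

section
/- Let (A, σ_1, …, σ_n) be an n-twisted commutative R-algebra with σ-coordinates x_1, …, x_n and associated partial derivations ∂_1, …, ∂_n. If z ∈ A satisfies ∂_i(z) = 0 for all i, then σ_i(z) = z for all i; thus A^{∂=0} := ∩_i ker ∂_i is contained in A^{σ=1} := {z ∈ A : σ_i(z) = z for all i}. If moreover the coordinates are strong, i.e., each y_i := x_i − σ_i(x_i) is a unit of A, then A^{∂=0} = A^{σ=1}. -/
/-- For `σ`-coordinates `x_1, …, x_n` of an `n`-twisted commutative `R`-algebra: if
`∂_i(z) = 0` for all `i` then `σ_i(z) = z` for all `i` (so `A^{∂=0} ⊆ A^{σ=1}`); if moreover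
the coordinates are strong (each `y_i := x_i - σ_i(x_i)` a unit), then `A^{∂=0} = A^{σ=1}`. -/
theorem stmt17 {R A : Type*} [CommRing R] [CommRing A] [Algebra R A]
    (n : ℕ) (σ : Fin n → A →ₐ[R] A) (x : Fin n → A) (pd : Fin n → A →ₗ[R] A)
    (hσcomm : ∀ i j a, σ i (σ j a) = σ j (σ i a))
    (hpdder : ∀ i a b, pd i (a * b) = b * pd i a + σ i a * pd i b)
    (hpdx : ∀ i j, pd i (x j) = if j = i then 1 else 0)
    (huniq : ∀ i (D : A →ₗ[R] A), (∀ a b, D (a * b) = b * D a + σ i a * D b) →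
      (∀ j, D (x j) = if j = i then 1 else 0) → D = pd i)
    (hspan : ∀ D : A →ₗ[R] A,
      (∃ Ds : Fin n → A →ₗ[R] A,
        (∀ i a b, Ds i (a * b) = b * Ds i a + σ i a * Ds i b) ∧ D = ∑ i, Ds i) →
      D = ∑ i, D (x i) • pd i) :
    (∀ z : A, (∀ i, pd i z = 0) → ∀ i, σ i z = z) ∧
    ((∀ i, IsUnit (x i - σ i (x i))) →
      ∀ z : A, (∀ i, pd i z = 0) ↔ ∀ i, σ i z = z) := by
  -- Step 1: σ_i fixes x_j for j ≠ i (from commutativity of A and the twisted Leibniz rule).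
  have hfix : ∀ i j : Fin n, j ≠ i → σ i (x j) = x j := by
    intro i j hj
    have h1 := hpdder i (x i) (x j)
    have h2 := hpdder i (x j) (x i)
    rw [mul_comm (x j) (x i)] at h2
    rw [h1, hpdx i i, hpdx i j] at h2
    simp [hj] at h2
    exact h2.symm
  -- Step 2: the key identity σ_i z - z = (σ_i x_i - x_i) * ∂_i z.
  have key : ∀ (i : Fin n) (z : A), σ i z - z = (σ i (x i) - x i) * pd i z := by
    intro i z
    set D : A →ₗ[R] A := (σ i).toLinearMap - LinearMap.id with hDdef
    have hDapp : ∀ a : A, D a = σ i a - a := by intro a; simp [hDdef]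
    have hD : D = ∑ j, D (x j) • pd j := by
      apply hspan
      refine ⟨fun j => if j = i then D else 0, ?_, ?_⟩
      · intro j a b
        by_cases h : j = i
        · subst h
          simp only [if_true, eq_self_iff_true, hDapp, map_mul]
          ring
        · simp [h]
      · simp [Finset.sum_ite_eq']
    have hz : D z = ∑ j, D (x j) * pd j z := by
      conv_lhs => rw [hD]
      simp [LinearMap.sum_apply, LinearMap.smul_apply, smul_eq_mul]
    rw [hDapp] at hz
    rw [hz, Finset.sum_eq_single i]
    · rw [hDapp]
    · intro j _ hj
      rw [hDapp, hfix i j hj, sub_self, zero_mul]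
    · intro h; exact absurd (Finset.mem_univ i) h
  constructor
  · intro z hz i
    have h := key i z
    rw [hz i, mul_zero] at h
    exact sub_eq_zero.mp h
  · intro hy z
    constructor
    · intro hz i
      have h := key i z
      rw [hz i, mul_zero] at h
      exact sub_eq_zero.mp h
    · intro hz i
      have h := key i z
      rw [hz i, sub_self] at h
      have h' : (x i - σ i (x i)) * pd i z = 0 := by linear_combination h
      exact ((hy i).mul_right_eq_zero).mp h'
end

section
/- Let (A, σ_1, …, σ_n) be an n-twisted commutative R-algebra with σ-coordinates x_1, …, x_n of Schwarz type and associated partial derivations ∂_{A,1}, …, ∂_{A,n}. Let B be the corresponding n-twisted Weyl algebra: an R-algebra containing A with pairwise commuting elements ∂_1, …, ∂_n such that the monomials ∂^k, k ∈ ℕ^n, form a left A-basis of B and ∂_i·x = ∂_{A,i}(x) + σ_i(x)·∂_i for all x ∈ A. Set y_i := x_i − σ_i(x_i) ∈ A and s_i := 1 − y_i·∂_i ∈ B. Then: (1) s_i·z = σ_i(z)·s_i for all z ∈ A; (2) s_i·∂_j = ∂_j·s_i whenever i ≠ j; (3) s_i·s_j = s_j·s_i for all i, j. -/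
/-- In the twisted Weyl algebra `B` of an `n`-twisted commutative `R`-algebra with
`σ`-coordinates `x_1, …, x_n` of Schwarz type, the elements `s_i := 1 - y_i·∂_i`
(with `y_i := x_i - σ_i(x_i)`) satisfy: `s_i·z = σ_i(z)·s_i` for `z ∈ A`,
`s_i·∂_j = ∂_j·s_i` for `i ≠ j`, and `s_i·s_j = s_j·s_i`. -/
theorem stmt18 {R A B : Type*} [CommRing R] [CommRing A] [Algebra R A]
    [Ring B] [Algebra R B]
    (n : ℕ) (σ : Fin n → A →ₐ[R] A) (x : Fin n → A) (pdA : Fin n → A →ₗ[R] A)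
    (hσcomm : ∀ i j a, σ i (σ j a) = σ j (σ i a))
    (hpdder : ∀ i a b, pdA i (a * b) = b * pdA i a + σ i a * pdA i b)
    (hpdx : ∀ i j, pdA i (x j) = if j = i then 1 else 0)
    (huniq : ∀ i (D : A →ₗ[R] A), (∀ a b, D (a * b) = b * D a + σ i a * D b) →
      (∀ j, D (x j) = if j = i then 1 else 0) → D = pdA i)
    (hspan : ∀ D : A →ₗ[R] A,
      (∃ Ds : Fin n → A →ₗ[R] A,
        (∀ i a b, Ds i (a * b) = b * Ds i a + σ i a * Ds i b) ∧ D = ∑ i, Ds i) →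
      D = ∑ i, D (x i) • pdA i)
    (hSchwarz1 : ∀ i j a, pdA i (pdA j a) = pdA j (pdA i a))
    (hSchwarz2 : ∀ i j, i ≠ j → ∀ a, σ i (pdA j a) = pdA j (σ i a))
    (ι : A →ₐ[R] B) (hι : Function.Injective ι)
    (pd : Fin n → B)
    (hpdcomm : ∀ i j, pd i * pd j = pd j * pd i)
    (hbasis : ∀ b : B, ∃! c : (Fin n → ℕ) →₀ A,
      b = c.sum fun k a => ι a * (List.ofFn fun i => pd i ^ k i).prod)
    (hrel : ∀ i (a : A), pd i * ι a = ι (pdA i a) + ι (σ i a) * pd i) :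
    (∀ i (z : A),
      (1 - ι (x i - σ i (x i)) * pd i) * ι z = ι (σ i z) * (1 - ι (x i - σ i (x i)) * pd i)) ∧
    (∀ i j, i ≠ j →
      (1 - ι (x i - σ i (x i)) * pd i) * pd j = pd j * (1 - ι (x i - σ i (x i)) * pd i)) ∧
    (∀ i j,
      (1 - ι (x i - σ i (x i)) * pd i) * (1 - ι (x j - σ j (x j)) * pd j) =
        (1 - ι (x j - σ j (x j)) * pd j) * (1 - ι (x i - σ i (x i)) * pd i)) := by

  -- y i abbreviation
  -- Key fact 0: σ i (x j) = x j for j ≠ i.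
  have key0 : ∀ i j, j ≠ i → σ i (x j) = x j := by
    intro i j hji
    have h1 : pdA i (x j * x i) = x i * pdA i (x j) + σ i (x j) * pdA i (x i) := hpdder i _ _
    have h2 : pdA i (x i * x j) = x j * pdA i (x i) + σ i (x i) * pdA i (x j) := hpdder i _ _
    rw [mul_comm (x j) (x i)] at h1
    rw [h1] at h2
    simp [hpdx, hji] at h2
    exact h2
  -- Key fact 1: (x i - σ i (x i)) * pdA i z = z - σ i z.
  have key1 : ∀ i z, (x i - σ i (x i)) * pdA i z = z - σ i z := by
    intro i z
    set E : A →ₗ[R] A := LinearMap.id - (σ i).toLinearMap with hE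
    have hEapp : ∀ a, E a = a - σ i a := fun a => rfl
    have hEleib : ∀ a b, E (a * b) = b * E a + σ i a * E b := by
      intro a b
      simp only [hEapp, map_mul]
      ring
    have hEspan : E = ∑ j, E (x j) • pdA j := by
      refine hspan E ⟨fun j => if j = i then E else 0, ?_, ?_⟩
      · intro j a b
        by_cases h : j = i
        · subst h; simp only [if_pos rfl]; exact hEleib a b
        · simp [h]
      · simp
    have h := LinearMap.congr_fun hEspan z
    simp only [LinearMap.sum_apply, LinearMap.smul_apply, smul_eq_mul] at h
    rw [Finset.sum_eq_single i] at h
    · rw [hEapp, hEapp] at h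
      exact h.symm
    · intro j _ hj
      rw [hEapp, key0 i j hj, sub_self, zero_mul]
    · intro hi; exact absurd (Finset.mem_univ i) hi
  -- commutation of pd j with ι (y i) for i ≠ j
  have hy : ∀ i j, i ≠ j → pd j * ι (x i - σ i (x i)) = ι (x i - σ i (x i)) * pd j := by
    intro i j hij
    have h1 : pdA j (x i - σ i (x i)) = 0 := by
      rw [map_sub, hpdx, ← hSchwarz2 i j hij, hpdx]
      simp [hij]
    have h2 : σ j (x i - σ i (x i)) = x i - σ i (x i) := by
      rw [map_sub, key0 j i hij, hσcomm, key0 j i hij]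
    rw [hrel, h1, h2, map_zero, zero_add]
  -- Part 1
  have part1 : ∀ i (z : A),
      (1 - ι (x i - σ i (x i)) * pd i) * ι z
        = ι (σ i z) * (1 - ι (x i - σ i (x i)) * pd i) := by
    intro i z
    have expand : (1 - ι (x i - σ i (x i)) * pd i) * ι z
        = ι z - ι (x i - σ i (x i)) * (pd i * ι z) := by noncomm_ring
    rw [expand, hrel, mul_add, ← mul_assoc, ← map_mul, ← map_mul, key1 i z]
    have : ι (σ i z) * (1 - ι (x i - σ i (x i)) * pd i)
        = ι (σ i z) - ι (σ i z * (x i - σ i (x i))) * pd i := by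
      rw [map_mul]; noncomm_ring
    rw [this, map_sub, mul_comm (x i - σ i (x i)) (σ i z)]
    noncomm_ring
  -- Part 2
  have part2 : ∀ i j, i ≠ j →
      (1 - ι (x i - σ i (x i)) * pd i) * pd j = pd j * (1 - ι (x i - σ i (x i)) * pd i) := by
    intro i j hij
    have h := hy i j hij
    calc (1 - ι (x i - σ i (x i)) * pd i) * pd j
        = pd j - ι (x i - σ i (x i)) * (pd i * pd j) := by noncomm_ring
      _ = pd j - ι (x i - σ i (x i)) * (pd j * pd i) := by rw [hpdcomm]
      _ = pd j - (ι (x i - σ i (x i)) * pd j) * pd i := by rw [mul_assoc]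
      _ = pd j - (pd j * ι (x i - σ i (x i))) * pd i := by rw [h]
      _ = pd j * (1 - ι (x i - σ i (x i)) * pd i) := by noncomm_ring
  refine ⟨part1, part2, ?_⟩
  -- Part 3
  have hcomm : ∀ i j, (ι (x i - σ i (x i)) * pd i) * (ι (x j - σ j (x j)) * pd j)
      = (ι (x j - σ j (x j)) * pd j) * (ι (x i - σ i (x i)) * pd i) := by
    intro i j
    by_cases hij : i = j
    · subst hij; rfl
    · have hji : j ≠ i := fun h => hij h.symm
      calc (ι (x i - σ i (x i)) * pd i) * (ι (x j - σ j (x j)) * pd j)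
          = ι (x i - σ i (x i)) * (pd i * ι (x j - σ j (x j))) * pd j := by noncomm_ring
        _ = ι (x i - σ i (x i)) * (ι (x j - σ j (x j)) * pd i) * pd j := by rw [hy j i hji]
        _ = (ι (x i - σ i (x i)) * ι (x j - σ j (x j))) * (pd i * pd j) := by noncomm_ring
        _ = (ι (x j - σ j (x j)) * ι (x i - σ i (x i))) * (pd j * pd i) := by
              rw [← map_mul, mul_comm (x i - σ i (x i)), map_mul, hpdcomm]
        _ = ι (x j - σ j (x j)) * (pd j * ι (x i - σ i (x i))) * pd i := by
              rw [hy i j hij]; noncomm_ring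
        _ = (ι (x j - σ j (x j)) * pd j) * (ι (x i - σ i (x i)) * pd i) := by noncomm_ring
  intro i j
  have expand : ∀ a b : B, (1 - a) * (1 - b) = 1 - b - a + a * b := by
    intro a b; noncomm_ring
  rw [expand, expand, hcomm i j]
  abel
end

section
/- Let (A, σ_1, …, σ_n) be an n-twisted commutative R-algebra with σ-coordinates x_1, …, x_n of Schwarz type and partial derivations ∂_{A,1}, …, ∂_{A,n}, and set y_i := x_i − σ_i(x_i). Let B be the corresponding n-twisted Weyl algebra (an R-algebra containing A with commuting elements ∂_1, …, ∂_n, the monomials ∂^k forming a left A-basis, and ∂_i·x = ∂_{A,i}(x) + σ_i(x)·∂_i for x ∈ A), and let P be a twisted polynomial ring in n variables over (A, σ) (a ring containing A with pairwise commuting elements T_1, …, T_n such that T_i·x = σ_i(x)·T_i for all x ∈ A and the monomials T^k form a left A-basis of P). Then there exists a unique R-algebra homomorphism Φ : P → B which is the identity on A and satisfies Φ(T_i) = 1 − y_i·∂_i for all i. If the coordinates are strong (each y_i a unit of A), then Φ is an isomorphism. -/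
/-!
In `B` put `y i = x i - σ i (x i)` and `S i = 1 - y i * ∂ i`. The map `id - σ i` is a
`σ i`-derivation killing the `x j` with `j ≠ i`, hence equals `y i • ∂ i`; this turns the Weyl
relation `∂ i * a = ∂_A i a + σ i a * ∂ i` into `S i * a = σ i a * S i`, and the Schwarz conditions
make the `S i` commute. So the `S i` satisfy the defining relations of the variables `T i`, and
since the monomials `T ^ k` form an `A`-basis of `P`, sending `a * T ^ k` to `a * S ^ k` is the
unique algebra map `Φ`.

If the `y i` are units, `D i = y i⁻¹ * (1 - T i)` satisfy in `P` the relations of the partial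
derivatives and `Φ (D i) = ∂ i`. As `T i = 1 - y i * D i`, the monomials `D ^ k` span `P` over
`A`, and `Φ` maps them to the basis `∂ ^ k` of `B`; hence `Φ` is bijective.
-/

namespace TwistedWeyl

section Monomial

variable {M N : Type*} [Monoid M] [Monoid N] {n : ℕ}

def monomial (v : Fin n → M) (k : Fin n → ℕ) : M :=
  (List.ofFn fun i => v i ^ k i).prod

@[simp]
theorem monomial_zero (v : Fin n → M) : monomial v 0 = 1 := by
  simp [monomial]

theorem map_monomial {F : Type*} [FunLike F M N] [MonoidHomClass F M N] (f : F)
    (v : Fin n → M) (k : Fin n → ℕ) : f (monomial v k) = monomial (fun i => f (v i)) k := by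
  simp [monomial, map_list_prod, List.map_ofFn, Function.comp_def]

theorem monomial_eq_prod {C : Type*} [CommMonoid C] (v : Fin n → C) (k : Fin n → ℕ) :
    monomial v k = ∏ i, v i ^ k i :=
  List.prod_ofFn

open scoped IsMulCommutative in
theorem monomial_add {v : Fin n → M} (hv : ∀ i j, Commute (v i) (v j)) (k l : Fin n → ℕ) :
    monomial v (k + l) = monomial v k * monomial v l := by
  have := Submonoid.isMulCommutative_closure M (s := Set.range v)
    (by rintro _ ⟨i, rfl⟩ _ ⟨j, rfl⟩; exact hv i j)
  let w : Fin n → Submonoid.closure (Set.range v) :=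
    fun i => ⟨v i, Submonoid.subset_closure ⟨i, rfl⟩⟩
  have hw (k : Fin n → ℕ) : monomial v k = ↑(monomial w k) :=
    (map_monomial (Submonoid.closure (Set.range v)).subtype w k).symm
  simp only [hw, monomial_eq_prod, Pi.add_apply, pow_add, Finset.prod_mul_distrib,
    Submonoid.coe_mul]

open scoped IsMulCommutative in
theorem monomial_single {v : Fin n → M} (hv : ∀ i j, Commute (v i) (v j)) (i : Fin n) :
    monomial v (Pi.single i 1) = v i := by
  have := Submonoid.isMulCommutative_closure M (s := Set.range v)
    (by rintro _ ⟨i, rfl⟩ _ ⟨j, rfl⟩; exact hv i j)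
  let w : Fin n → Submonoid.closure (Set.range v) :=
    fun i => ⟨v i, Submonoid.subset_closure ⟨i, rfl⟩⟩
  have hw (k : Fin n → ℕ) : monomial v k = ↑(monomial w k) :=
    (map_monomial (Submonoid.closure (Set.range v)).subtype w k).symm
  simp [hw, monomial_eq_prod, Pi.single_apply, pow_ite, w]

end Monomial

section Combination

variable {R A X Y : Type*} [CommSemiring R] [Semiring A] [Algebra R A] [Semiring X] [Algebra R X]
  [Semiring Y] [Algebra R Y] {n : ℕ}

noncomputable def monomialCombination (ι : A →ₐ[R] X) (v : Fin n → X) :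
    ((Fin n → ℕ) →₀ A) →ₗ[R] X :=
  Finsupp.lsum R fun k => (LinearMap.mulRight R (monomial v k)).comp ι.toLinearMap

variable (ι : A →ₐ[R] X) (v : Fin n → X)

theorem monomialCombination_apply (c : (Fin n → ℕ) →₀ A) :
    monomialCombination ι v c = c.sum fun k a => ι a * monomial v k := by
  simp [monomialCombination, Finsupp.lsum_apply, Finsupp.sum]

@[simp]
theorem monomialCombination_single (k : Fin n → ℕ) (a : A) :
    monomialCombination ι v (Finsupp.single k a) = ι a * monomial v k := by
  simp [monomialCombination_apply]

theorem monomialCombination_smul (a : A) (c : (Fin n → ℕ) →₀ A) :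
    monomialCombination ι v (a • c) = ι a * monomialCombination ι v c := by
  induction c using Finsupp.induction_linear with
  | zero => simp
  | add c d hc hd => rw [smul_add, map_add, map_add, mul_add, hc, hd]
  | single k b =>
    rw [Finsupp.smul_single, smul_eq_mul, monomialCombination_single, monomialCombination_single,
      map_mul, mul_assoc]

theorem map_monomialCombination (Ψ : X →ₐ[R] Y) (c : (Fin n → ℕ) →₀ A) :
    Ψ (monomialCombination ι v c) = monomialCombination (Ψ.comp ι) (fun i => Ψ (v i)) c := by
  simp [monomialCombination_apply, map_finsuppSum, map_monomial]

theorem monomialCombination_mem {S : Subalgebra R X} (hι : ∀ a, ι a ∈ S) (hv : ∀ i, v i ∈ S)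
    (c : (Fin n → ℕ) →₀ A) : monomialCombination ι v c ∈ S := by
  rw [monomialCombination_apply]
  refine Subalgebra.sum_mem _ fun k _ => mul_mem (hι _) (Subalgebra.list_prod_mem _ ?_)
  simp only [List.mem_ofFn, forall_exists_index]
  rintro _ i rfl
  exact pow_mem (hv i) _

theorem bijective_monomialCombination
    (h : ∀ p : X, ∃! c : (Fin n → ℕ) →₀ A,
      p = c.sum fun k a => ι a * (List.ofFn fun i => v i ^ k i).prod) :
    Function.Bijective (monomialCombination ι v) :=
  Function.bijective_iff_existsUnique _ |>.2 fun p => by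
    simpa only [monomialCombination_apply, monomial, eq_comm] using h p

theorem eq_top_of_mul_mem (hv : Function.Surjective (monomialCombination ι v))
    {M : Submodule R X} (h1 : 1 ∈ M) (hι : ∀ a, ∀ m ∈ M, ι a * m ∈ M)
    (hvM : ∀ i, ∀ m ∈ M, v i * m ∈ M) : M = ⊤ := by
  let stab : Subalgebra R X :=
    { carrier := {p | ∀ m ∈ M, p * m ∈ M}
      mul_mem' := fun hp hq m hm => by rw [mul_assoc]; exact hp _ (hq m hm)
      add_mem' := fun hp hq m hm => by rw [add_mul]; exact add_mem (hp m hm) (hq m hm)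
      algebraMap_mem' := fun r m hm => by rw [← Algebra.smul_def]; exact M.smul_mem r hm }
  refine eq_top_iff.2 fun p _ => ?_
  obtain ⟨c, rfl⟩ := hv p
  simpa using monomialCombination_mem ι v (S := stab) hι hvM c 1 h1

theorem algHom_ext_of_surjective (hv : Function.Surjective (monomialCombination ι v))
    {Φ Ψ : X →ₐ[R] Y} (hι : ∀ a, Φ (ι a) = Ψ (ι a)) (hΦΨ : ∀ i, Φ (v i) = Ψ (v i)) :
    Φ = Ψ := by
  ext p
  obtain ⟨c, rfl⟩ := hv p
  have hcomp : Φ.comp ι = Ψ.comp ι := AlgHom.ext hι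
  rw [map_monomialCombination, map_monomialCombination, hcomp, funext hΦΨ]

end Combination

section Families

variable {R A X Y : Type*} [CommSemiring R] [Semiring A] [Algebra R A] [Semiring X] [Algebra R X]
  [Semiring Y] [Algebra R Y] {n : ℕ} {ι : A →ₐ[R] X} {ι' : A →ₐ[R] Y} {σ : Fin n → A →ₐ[R] A}

/-- The relations of the variables of a twisted polynomial ring over `A`. -/
structure IsTwistedFamily (ι : A →ₐ[R] X) (σ : Fin n → A →ₐ[R] A) (v : Fin n → X) : Prop where
  commute : ∀ i j, Commute (v i) (v j)
  mul_apply : ∀ i a, v i * ι a = ι (σ i a) * v i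

/-- The relations of the partial derivatives in a twisted Weyl algebra over `A`. -/
structure IsWeylFamily (ι : A →ₐ[R] X) (σ : Fin n → A →ₐ[R] A) (δ : Fin n → A → A)
    (p : Fin n → X) : Prop where
  commute : ∀ i j, Commute (p i) (p j)
  mul_apply : ∀ i a, p i * ι a = ι (δ i a) + ι (σ i a) * p i

variable (ι) in
def twistingPairs : Submonoid (X × (A →ₐ[R] A)) where
  carrier := {p | ∀ a, p.1 * ι a = ι (p.2 a) * p.1}
  one_mem' a := by simp
  mul_mem' {p q} hp hq a := by
    simp only [Prod.fst_mul, Prod.snd_mul, AlgHom.mul_apply]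
    rw [mul_assoc, hq, ← mul_assoc, hp, mul_assoc]

theorem IsTwistedFamily.monomial_mul {v : Fin n → X} (hv : IsTwistedFamily ι σ v)
    (k : Fin n → ℕ) (a : A) : monomial v k * ι a = ι (monomial σ k a) * monomial v k := by
  have hmem : monomial (fun i => (v i, σ i)) k ∈ twistingPairs ι := by
    refine Submonoid.list_prod_mem _ ?_
    simp only [List.mem_ofFn, forall_exists_index]
    rintro _ i rfl
    exact pow_mem (show (v i, σ i) ∈ twistingPairs ι from hv.mul_apply i) _
  have hfst := map_monomial (MonoidHom.fst X (A →ₐ[R] A)) (fun i => (v i, σ i)) k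
  have hsnd := map_monomial (MonoidHom.snd X (A →ₐ[R] A)) (fun i => (v i, σ i)) k
  simp only [MonoidHom.coe_fst, MonoidHom.coe_snd] at hfst hsnd
  simpa only [hfst, hsnd] using hmem a

theorem IsTwistedFamily.single_mul_single {v : Fin n → X} (hv : IsTwistedFamily ι σ v)
    (k l : Fin n → ℕ) (a b : A) :
    ι a * monomial v k * (ι b * monomial v l) = ι (a * monomial σ k b) * monomial v (k + l) := by
  rw [monomial_add hv.commute, map_mul]
  simp only [mul_assoc]
  rw [← mul_assoc (monomial v k), hv.monomial_mul, mul_assoc]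

theorem IsTwistedFamily.map_monomialCombination_mul {v : Fin n → X} {w : Fin n → Y}
    (hv : IsTwistedFamily ι σ v) (hw : IsTwistedFamily ι' σ w) {f : X →ₗ[R] Y}
    (hf : ∀ c, f (monomialCombination ι v c) = monomialCombination ι' w c)
    (c d : (Fin n → ℕ) →₀ A) :
    f (monomialCombination ι v c * monomialCombination ι v d) =
      monomialCombination ι' w c * monomialCombination ι' w d := by
  induction c using Finsupp.induction_linear with
  | zero => simp
  | add c c' hc hc' => simp only [map_add, add_mul, hc, hc']
  | single k a =>
    induction d using Finsupp.induction_linear with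
    | zero => simp
    | add d d' hd hd' => simp only [map_add, mul_add, hd, hd']
    | single l b =>
      simp only [monomialCombination_single]
      rw [hv.single_mul_single, hw.single_mul_single, ← monomialCombination_single, hf,
        monomialCombination_single]

theorem IsTwistedFamily.exists_algHom {v : Fin n → X} {w : Fin n → Y}
    (hv : IsTwistedFamily ι σ v) (hbasis : Function.Bijective (monomialCombination ι v))
    (hw : IsTwistedFamily ι' σ w) :
    ∃ Φ : X →ₐ[R] Y, (∀ a, Φ (ι a) = ι' a) ∧ ∀ i, Φ (v i) = w i := by
  let e := LinearEquiv.ofBijective _ hbasis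
  let f := monomialCombination ι' w ∘ₗ e.symm.toLinearMap
  have hf (c) : f (monomialCombination ι v c) = monomialCombination ι' w c :=
    congrArg (monomialCombination ι' w) (e.symm_apply_apply c)
  have hone : (1 : X) = monomialCombination ι v (Finsupp.single 0 1) := by simp
  have hmul (p q : X) : f (p * q) = f p * f q := by
    obtain ⟨c, rfl⟩ := hbasis.2 p
    obtain ⟨d, rfl⟩ := hbasis.2 q
    rw [hv.map_monomialCombination_mul hw hf, hf, hf]
  refine ⟨AlgHom.ofLinearMap f (by rw [hone, hf]; simp) hmul, fun a => ?_, fun i => ?_⟩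
  · have hι : ι a = monomialCombination ι v (Finsupp.single 0 a) := by simp
    rw [AlgHom.ofLinearMap_apply, hι, hf, monomialCombination_single, monomial_zero, mul_one]
  · have hvi : v i = monomialCombination ι v (Finsupp.single (Pi.single i 1) 1) := by
      simp [monomial_single hv.commute]
    rw [AlgHom.ofLinearMap_apply, hvi, hf, monomialCombination_single, monomial_single hw.commute,
      map_one, one_mul]

theorem apply_mul_mem_range_monomialCombination {v : Fin n → X} (a : A) {m : X}
    (hm : m ∈ LinearMap.range (monomialCombination ι v)) :
    ι a * m ∈ LinearMap.range (monomialCombination ι v) := by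
  obtain ⟨c, rfl⟩ := hm
  exact ⟨a • c, monomialCombination_smul ι v a c⟩

theorem IsWeylFamily.mul_mem_range_monomialCombination {δ : Fin n → A → A} {p : Fin n → X}
    (hp : IsWeylFamily ι σ δ p) (i : Fin n) {m : X}
    (hm : m ∈ LinearMap.range (monomialCombination ι p)) :
    p i * m ∈ LinearMap.range (monomialCombination ι p) := by
  obtain ⟨c, rfl⟩ := hm
  induction c using Finsupp.induction_linear with
  | zero => simp
  | add c d hc hd => rw [map_add, mul_add]; exact add_mem hc hd
  | single k a =>
    refine ⟨Finsupp.single k (δ i a) + Finsupp.single (Pi.single i 1 + k) (σ i a), ?_⟩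
    rw [map_add, monomialCombination_single, monomialCombination_single,
      monomialCombination_single, monomial_add hp.commute, monomial_single hp.commute,
      ← mul_assoc (p i), hp.mul_apply, add_mul, mul_assoc]

theorem bijective_of_monomialCombination {v : Fin n → X} {w : Fin n → Y} (Φ : X →ₐ[R] Y)
    (hv : Function.Surjective (monomialCombination ι v))
    (hw : Function.Bijective (monomialCombination ι' w))
    (hι : ∀ a, Φ (ι a) = ι' a) (hΦv : ∀ i, Φ (v i) = w i) : Function.Bijective Φ := by
  have hcomp : Φ.comp ι = ι' := AlgHom.ext hι
  have hΦ : ⇑Φ ∘ monomialCombination ι v = monomialCombination ι' w := by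
    funext c
    rw [Function.comp_apply, map_monomialCombination, hcomp, funext hΦv]
  rw [← hΦ] at hw
  exact ⟨hw.1.of_comp_right hv, hw.2.of_comp⟩

end Families

section Ring

variable {R A X : Type*} [CommRing R] [CommRing A] [Algebra R A] [Ring X] [Algebra R X] {n : ℕ}
  {ι : A →ₐ[R] X} {σ : Fin n → A →ₐ[R] A}

theorem IsWeylFamily.isTwistedFamily_one_sub_mul {δ : Fin n → A → A} {p : Fin n → X}
    {y : Fin n → A} (hp : IsWeylFamily ι σ δ p) (hy : ∀ i a, y i * δ i a = a - σ i a)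
    (hδy : ∀ i j, i ≠ j → δ i (y j) = 0) (hσy : ∀ i j, i ≠ j → σ i (y j) = y j) :
    IsTwistedFamily ι σ fun i => 1 - ι (y i) * p i where
  commute i j := by
    obtain rfl | hij := eq_or_ne i j
    · exact Commute.refl _
    have hpy : ∀ i j, i ≠ j → Commute (p i) (ι (y j)) := fun i j h => by
      rw [Commute, SemiconjBy, hp.mul_apply, hδy i j h, hσy i j h, map_zero, zero_add]
    have hyy : Commute (ι (y i)) (ι (y j)) := (Commute.all (y i) (y j)).map ι
    have h : Commute (ι (y i) * p i) (ι (y j) * p j) :=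
      (hyy.mul_right (hpy j i hij.symm).symm).mul_left ((hpy i j hij).mul_right (hp.commute i j))
    exact (Commute.one_left _).sub_left ((Commute.one_right _).sub_right h)
  mul_apply i a := by
    have hya : ι (y i) * ι (δ i a) = ι a - ι (σ i a) := by rw [← map_mul, hy, map_sub]
    rw [sub_mul, one_mul, mul_assoc, hp.mul_apply, mul_add, hya, ← mul_assoc, ← map_mul,
      mul_comm (y i), map_mul, mul_sub, mul_one, mul_assoc]
    abel

theorem IsTwistedFamily.isWeylFamily_mul_one_sub {T : Fin n → X} {u : Fin n → A}
    (hT : IsTwistedFamily ι σ T) (hσu : ∀ i j, i ≠ j → σ i (u j) = u j) :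
    IsWeylFamily ι σ (fun i a => u i * (a - σ i a)) fun i => ι (u i) * (1 - T i) where
  commute i j := by
    obtain rfl | hij := eq_or_ne i j
    · exact Commute.refl _
    have hTu : ∀ i j, i ≠ j → Commute (1 - T i) (ι (u j)) := fun i j h =>
      (Commute.one_left _).sub_left (by rw [Commute, SemiconjBy, hT.mul_apply, hσu i j h])
    have huu : Commute (ι (u i)) (ι (u j)) := (Commute.all (u i) (u j)).map ι
    have hTT : Commute (1 - T i) (1 - T j) :=
      (Commute.one_left _).sub_left ((Commute.one_right _).sub_right (hT.commute i j))
    exact (huu.mul_right (hTu j i hij.symm).symm).mul_left ((hTu i j hij).mul_right hTT)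
  mul_apply i a := by
    rw [mul_assoc, sub_mul, one_mul, hT.mul_apply, ← mul_assoc (ι (σ i a)), ← map_mul,
      mul_comm (σ i a)]
    simp only [map_mul, map_sub, mul_sub, mul_one, mul_assoc]
    abel

theorem IsTwistedFamily.surjective_monomialCombination_mul_one_sub {T : Fin n → X}
    (hT : IsTwistedFamily ι σ T) (hsurj : Function.Surjective (monomialCombination ι T))
    {y u : Fin n → A} (hyu : ∀ i, y i * u i = 1) (hσy : ∀ i j, i ≠ j → σ i (y j) = y j) :
    Function.Surjective (monomialCombination ι fun i => ι (u i) * (1 - T i)) := by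
  have hσu (i j) (h : i ≠ j) : σ i (u j) = u j :=
    left_inv_eq_right_inv (by rw [← hσy i j h, ← map_mul, mul_comm, hyu, map_one]) (hyu j)
  have hD := hT.isWeylFamily_mul_one_sub hσu
  rw [← LinearMap.range_eq_top]
  refine eq_top_of_mul_mem ι T hsurj ⟨Finsupp.single 0 1, by simp⟩
    (fun a m => apply_mul_mem_range_monomialCombination a) fun i m hm => ?_
  have hTi : T i = 1 - ι (y i) * (ι (u i) * (1 - T i)) := by
    rw [← mul_assoc, ← map_mul, hyu, map_one, one_mul, sub_sub_cancel]
  rw [hTi, sub_mul, one_mul, mul_assoc]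
  exact sub_mem hm
    (apply_mul_mem_range_monomialCombination _ (hD.mul_mem_range_monomialCombination i hm))

end Ring

section Coordinates

theorem apply_eq_self_of_twistedDerivation {A : Type*} [CommSemiring A] {s δ : A → A}
    (hδ : ∀ a b, δ (a * b) = b * δ a + s a * δ b) {a b : A} (ha : δ a = 1) (hb : δ b = 0) :
    s b = b := by
  have h := hδ a b
  rw [mul_comm, hδ b a, ha, hb] at h
  simpa using h

variable {R A : Type*} [CommRing R] [CommRing A] [Algebra R A] {n : ℕ}
  {σ : Fin n → A →ₐ[R] A} {x : Fin n → A} {pdA : Fin n → A →ₗ[R] A}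

theorem twist_apply_coordinate_of_ne (hder : ∀ i a b, pdA i (a * b) = b * pdA i a + σ i a * pdA i b)
    (hcoord : ∀ i j, pdA i (x j) = if j = i then 1 else 0) {i j : Fin n} (h : j ≠ i) :
    σ i (x j) = x j :=
  apply_eq_self_of_twistedDerivation (hder i) (a := x i) (by simp [hcoord]) (by simp [hcoord, h])

theorem twist_apply_coordinate_sub_of_ne (hσ : ∀ i j a, σ i (σ j a) = σ j (σ i a))
    (hder : ∀ i a b, pdA i (a * b) = b * pdA i a + σ i a * pdA i b)
    (hcoord : ∀ i j, pdA i (x j) = if j = i then 1 else 0) {i j : Fin n} (h : i ≠ j) :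
    σ i (x j - σ j (x j)) = x j - σ j (x j) := by
  rw [map_sub, hσ, twist_apply_coordinate_of_ne hder hcoord h.symm]

theorem pd_apply_coordinate_sub_of_ne (hcoord : ∀ i j, pdA i (x j) = if j = i then 1 else 0)
    (hschwarz : ∀ i j, i ≠ j → ∀ a, σ i (pdA j a) = pdA j (σ i a)) {i j : Fin n} (h : i ≠ j) :
    pdA i (x j - σ j (x j)) = 0 := by
  rw [map_sub, ← hschwarz j i h.symm, hcoord, if_neg h.symm, map_zero, sub_zero]

/-- `id - σ i` is a `σ i`-derivation vanishing on the `x j` with `j ≠ i`, so it is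
`(x i - σ i (x i)) • ∂ i`. -/
theorem coordinate_sub_mul_pd_apply (hder : ∀ i a b, pdA i (a * b) = b * pdA i a + σ i a * pdA i b)
    (hcoord : ∀ i j, pdA i (x j) = if j = i then 1 else 0)
    (hspan : ∀ D : A →ₗ[R] A,
      (∃ Ds : Fin n → A →ₗ[R] A,
        (∀ i a b, Ds i (a * b) = b * Ds i a + σ i a * Ds i b) ∧ D = ∑ i, Ds i) →
      D = ∑ i, D (x i) • pdA i) (i : Fin n) (a : A) :
    (x i - σ i (x i)) * pdA i a = a - σ i a := by
  classical
  let D : A →ₗ[R] A := LinearMap.id - (σ i).toLinearMap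
  have hD (a b : A) : D (a * b) = b * D a + σ i a * D b := by
    simp only [D, LinearMap.sub_apply, LinearMap.id_apply, AlgHom.toLinearMap_apply, map_mul]
    ring
  have hDx (j : Fin n) : D (x j) = if j = i then x i - σ i (x i) else 0 := by
    split_ifs with h
    · rw [h]; rfl
    · exact sub_eq_zero.2 (twist_apply_coordinate_of_ne hder hcoord h).symm
  have hDs : D = ∑ j, D (x j) • pdA j := by
    refine hspan D ⟨Pi.single i D, fun j a b => ?_, by rw [Finset.sum_pi_single']; simp⟩
    obtain rfl | h := eq_or_ne j i
    · simpa using hD a b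
    · simp [Pi.single_eq_of_ne h]
  simpa [hDx, D] using (LinearMap.congr_fun hDs a).symm

end Coordinates

end TwistedWeyl

open TwistedWeyl

theorem stmt19_general {R A B P : Type*} [CommRing R] [CommRing A] [Algebra R A]
    [Ring B] [Algebra R B] [Ring P] [Algebra R P]
    (n : ℕ) (σ : Fin n → A →ₐ[R] A) (x : Fin n → A) (pdA : Fin n → A →ₗ[R] A)
    (hσcomm : ∀ i j a, σ i (σ j a) = σ j (σ i a))
    (hpdder : ∀ i a b, pdA i (a * b) = b * pdA i a + σ i a * pdA i b)
    (hpdx : ∀ i j, pdA i (x j) = if j = i then 1 else 0)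
    (hspan : ∀ D : A →ₗ[R] A,
      (∃ Ds : Fin n → A →ₗ[R] A,
        (∀ i a b, Ds i (a * b) = b * Ds i a + σ i a * Ds i b) ∧ D = ∑ i, Ds i) →
      D = ∑ i, D (x i) • pdA i)
    (hSchwarz2 : ∀ i j, i ≠ j → ∀ a, σ i (pdA j a) = pdA j (σ i a))
    -- the twisted Weyl algebra B
    (ιB : A →ₐ[R] B)
    (pd : Fin n → B)
    (hpdcomm : ∀ i j, pd i * pd j = pd j * pd i)
    (hbasisB : ∀ b : B, ∃! c : (Fin n → ℕ) →₀ A,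
      b = c.sum fun k a => ιB a * (List.ofFn fun i => pd i ^ k i).prod)
    (hrelB : ∀ i (a : A), pd i * ιB a = ιB (pdA i a) + ιB (σ i a) * pd i)
    -- the twisted polynomial ring P
    (ιP : A →ₐ[R] P)
    (T : Fin n → P)
    (hTcomm : ∀ i j, T i * T j = T j * T i)
    (hbasisP : ∀ p : P, ∃! c : (Fin n → ℕ) →₀ A,
      p = c.sum fun k a => ιP a * (List.ofFn fun i => T i ^ k i).prod)
    (hrelP : ∀ i (a : A), T i * ιP a = ιP (σ i a) * T i) :
    (∃! Φ : P →ₐ[R] B,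
      (∀ a : A, Φ (ιP a) = ιB a) ∧
      ∀ i, Φ (T i) = 1 - ιB (x i - σ i (x i)) * pd i) ∧
    ((∀ i, IsUnit (x i - σ i (x i))) →
      ∀ Φ : P →ₐ[R] B,
        (∀ a : A, Φ (ιP a) = ιB a) →
        (∀ i, Φ (T i) = 1 - ιB (x i - σ i (x i)) * pd i) →
        Function.Bijective Φ) := by
  have hσy (i j) (h : i ≠ j) := twist_apply_coordinate_sub_of_ne hσcomm hpdder hpdx h
  have hT : IsTwistedFamily ιP σ T := ⟨hTcomm, hrelP⟩
  have hS : IsTwistedFamily ιB σ fun i => 1 - ιB (x i - σ i (x i)) * pd i :=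
    IsWeylFamily.isTwistedFamily_one_sub_mul (δ := fun i => pdA i) ⟨hpdcomm, hrelB⟩
      (coordinate_sub_mul_pd_apply hpdder hpdx hspan)
      (fun i j h => pd_apply_coordinate_sub_of_ne hpdx hSchwarz2 h) hσy
  have hP := bijective_monomialCombination ιP T hbasisP
  refine ⟨?_, fun hunit Φ hΦι hΦT => ?_⟩
  · obtain ⟨Φ, hΦι, hΦT⟩ := hT.exists_algHom hP hS
    refine ⟨Φ, ⟨hΦι, hΦT⟩, fun Ψ ⟨hΨι, hΨT⟩ => ?_⟩
    exact algHom_ext_of_surjective ιP T hP.2 (fun a => by rw [hΨι, hΦι]) fun i => by rw [hΨT, hΦT]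
  · choose u hu using fun i => (hunit i).exists_right_inv
    refine bijective_of_monomialCombination Φ
      (hT.surjective_monomialCombination_mul_one_sub hP.2 hu hσy)
      (bijective_monomialCombination ιB pd hbasisB) hΦι fun i => ?_
    rw [map_mul, map_sub, map_one, hΦι, hΦT, sub_sub_cancel, ← mul_assoc, ← map_mul, mul_comm, hu,
      map_one, one_mul]

/-- For an `n`-twisted commutative `R`-algebra with `σ`-coordinates of Schwarz type, there is a
unique `A`-linear `R`-algebra homomorphism `Φ` from the twisted polynomial ring `P = A[T]_σ` to
the twisted Weyl algebra `B` with `Φ(T_i) = 1 - y_i·∂_i` (where `y_i := x_i - σ_i(x_i)`);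
if the coordinates are strong, `Φ` is an isomorphism. -/
theorem stmt19 {R A B P : Type*} [CommRing R] [CommRing A] [Algebra R A]
    [Ring B] [Algebra R B] [Ring P] [Algebra R P]
    (n : ℕ) (σ : Fin n → A →ₐ[R] A) (x : Fin n → A) (pdA : Fin n → A →ₗ[R] A)
    (hσcomm : ∀ i j a, σ i (σ j a) = σ j (σ i a))
    (hpdder : ∀ i a b, pdA i (a * b) = b * pdA i a + σ i a * pdA i b)
    (hpdx : ∀ i j, pdA i (x j) = if j = i then 1 else 0)
    (huniq : ∀ i (D : A →ₗ[R] A), (∀ a b, D (a * b) = b * D a + σ i a * D b) →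
      (∀ j, D (x j) = if j = i then 1 else 0) → D = pdA i)
    (hspan : ∀ D : A →ₗ[R] A,
      (∃ Ds : Fin n → A →ₗ[R] A,
        (∀ i a b, Ds i (a * b) = b * Ds i a + σ i a * Ds i b) ∧ D = ∑ i, Ds i) →
      D = ∑ i, D (x i) • pdA i)
    (hSchwarz1 : ∀ i j a, pdA i (pdA j a) = pdA j (pdA i a))
    (hSchwarz2 : ∀ i j, i ≠ j → ∀ a, σ i (pdA j a) = pdA j (σ i a))
    -- the twisted Weyl algebra B
    (ιB : A →ₐ[R] B) (hιB : Function.Injective ιB)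
    (pd : Fin n → B)
    (hpdcomm : ∀ i j, pd i * pd j = pd j * pd i)
    (hbasisB : ∀ b : B, ∃! c : (Fin n → ℕ) →₀ A,
      b = c.sum fun k a => ιB a * (List.ofFn fun i => pd i ^ k i).prod)
    (hrelB : ∀ i (a : A), pd i * ιB a = ιB (pdA i a) + ιB (σ i a) * pd i)
    -- the twisted polynomial ring P
    (ιP : A →ₐ[R] P) (hιP : Function.Injective ιP)
    (T : Fin n → P)
    (hTcomm : ∀ i j, T i * T j = T j * T i)
    (hbasisP : ∀ p : P, ∃! c : (Fin n → ℕ) →₀ A,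
      p = c.sum fun k a => ιP a * (List.ofFn fun i => T i ^ k i).prod)
    (hrelP : ∀ i (a : A), T i * ιP a = ιP (σ i a) * T i) :
    (∃! Φ : P →ₐ[R] B,
      (∀ a : A, Φ (ιP a) = ιB a) ∧
      ∀ i, Φ (T i) = 1 - ιB (x i - σ i (x i)) * pd i) ∧
    ((∀ i, IsUnit (x i - σ i (x i))) →
      ∀ Φ : P →ₐ[R] B,
        (∀ a : A, Φ (ιP a) = ιB a) →
        (∀ i, Φ (T i) = 1 - ιB (x i - σ i (x i)) * pd i) →
        Function.Bijective Φ) :=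
  stmt19_general n σ x pdA hσcomm hpdder hpdx hspan hSchwarz2 ιB pd hpdcomm hbasisB hrelB ιP T
    hTcomm hbasisP hrelP
end
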